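/- Let 1 < p < 2 and let b: (0,∞)×ℝⁿ → ℂ be supported in the tent over a ball B_i = B(c_i, r_i), i.e. supp b ⊆ {(t,y): B(y,√t) ⊆ B_i}. Then (∫₀^∞ |⨍_{B_i} b(t,y) dy|² dt)^{1/2} ≲ |B_i|^{−1/p} ‖b‖_{T^p}, with implicit constant depending only on n and p. -/

import Mathlib

open MeasureTheory Set ENNReal

/-- The conical (tent space) square function norm `‖g‖_{T^p}`. -/
noncomputable def Tnorm (n : ℕ) (p : ℝ)
    (g : ℝ → EuclideanSpace ℝ (Fin n) → ℝ≥0∞) : ℝ≥0∞ :=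
  (∫⁻ x, (∫⁻ t in Ioi (0 : ℝ),
      (volume (Metric.ball x (Real.sqrt t)))⁻¹ *
        ∫⁻ y in Metric.ball x (Real.sqrt t), (g t y) ^ 2) ^ (p / 2)) ^ (1 / p)

/-!
For fixed `t`, the tent support of `b(t,·)` lets Fubini rewrite `⨍_B |b(t,·)|` as the
`B`-average of `x ↦ ⨍_{B(x,√t)} |b(t,·)|`, and Cauchy–Schwarz on each small ball bounds this by
`⨍_B (⨍_{B(x,√t)} |b(t,·)|²)^{1/2} dx`. Minkowski's integral inequality moves the `L²(dt)` norm
inside the `x`-average, which yields `⨍_B A(b)` for the area function `A(b)`; Hölder then gives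
`⨍_B A(b) ≤ (⨍_B A(b)^p)^{1/p} ≤ |B|^{-1/p} ‖b‖_{T^p}`.
-/

open Metric Function

theorem laverage_le_rpow_laverage_rpow {α : Type*} [MeasurableSpace α] {μ : Measure α}
    {f : α → ℝ≥0∞} {p : ℝ} (hp : 1 ≤ p) (hf : AEMeasurable f μ) :
    ⨍⁻ x, f x ∂μ ≤ (⨍⁻ x, f x ^ p ∂μ) ^ (1 / p) := by
  set ν := (μ univ)⁻¹ • μ
  have hν : ν univ ≤ 1 := by simp [ν, ENNReal.inv_mul_le_one]
  have holder := eLpNorm'_le_eLpNorm'_mul_rpow_measure_univ one_pos hp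
    (hf.smul_measure (μ univ)⁻¹).aestronglyMeasurable (μ := ν)
  simp only [eLpNorm', enorm_eq_self, rpow_one, div_one] at holder
  calc ⨍⁻ x, f x ∂μ ≤ (⨍⁻ x, f x ^ p ∂μ) ^ (1 / p) * ν univ ^ (1 - 1 / p) := holder
    _ ≤ (⨍⁻ x, f x ^ p ∂μ) ^ (1 / p) :=
      mul_le_of_le_one_right' <| rpow_le_one hν <| sub_nonneg.2 <|
        div_le_one_of_le₀ hp (zero_le_one.trans hp)

theorem enorm_average_le_laverage {α F : Type*} [MeasurableSpace α] {μ : Measure α}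
    [NormedAddCommGroup F] [NormedSpace ℝ F] (f : α → F) :
    ‖⨍ x, f x ∂μ‖ₑ ≤ ⨍⁻ x, ‖f x‖ₑ ∂μ :=
  enorm_integral_le_lintegral_enorm f

theorem rpow_half_lintegral_sq_lintegral_le {α β : Type*} [MeasurableSpace α] [MeasurableSpace β]
    {μ : Measure α} {ν : Measure β} [SFinite μ] [SFinite ν]
    {f : α → β → ℝ≥0∞} (hf : Measurable (uncurry f)) :
    (∫⁻ t, (∫⁻ x, f t x ∂ν) ^ 2 ∂μ) ^ (1 / 2 : ℝ) ≤
      ∫⁻ x, (∫⁻ t, f t x ^ 2 ∂μ) ^ (1 / 2 : ℝ) ∂ν := by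
  -- expand the square as a double integral and apply Cauchy–Schwarz in `t`
  have hf_left (t : α) : Measurable (f t) := hf.comp measurable_prodMk_left
  have hf_right (x : β) : Measurable fun t ↦ f t x :=
    hf.comp (measurable_id.prodMk measurable_const)
  set g : β → ℝ≥0∞ := fun x ↦ (∫⁻ t, f t x ^ 2 ∂μ) ^ (1 / 2 : ℝ)
  have hg : Measurable g :=
    (Measurable.lintegral_prod_right (f := fun x t ↦ f t x ^ 2)
      ((hf.pow_const 2).comp measurable_swap)).pow_const _
  have cauchy_schwarz (x x' : β) : ∫⁻ t, f t x * f t x' ∂μ ≤ g x * g x' := by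
    simpa only [rpow_two, Pi.mul_apply] using ENNReal.lintegral_mul_le_Lp_mul_Lq μ
      Real.HolderConjugate.two_two (hf_right x).aemeasurable (hf_right x').aemeasurable
  have sq_eq (t : α) : (∫⁻ x, f t x ∂ν) ^ 2 = ∫⁻ q : β × β, f t q.1 * f t q.2 ∂ν.prod ν := by
    rw [sq, lintegral_prod_mul (hf_left t).aemeasurable (hf_left t).aemeasurable]
  have expand : ∫⁻ t, (∫⁻ x, f t x ∂ν) ^ 2 ∂μ =
      ∫⁻ q : β × β, ∫⁻ t, f t q.1 * f t q.2 ∂μ ∂ν.prod ν := by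
    simp_rw [sq_eq]
    exact lintegral_lintegral_swap ((hf.comp (measurable_fst.prodMk measurable_snd.fst)).mul
        (hf.comp (measurable_fst.prodMk measurable_snd.snd))).aemeasurable
  have key : ∫⁻ t, (∫⁻ x, f t x ∂ν) ^ 2 ∂μ ≤ (∫⁻ x, g x ∂ν) ^ 2 := by
    rw [expand, sq, ← lintegral_prod_mul hg.aemeasurable hg.aemeasurable]
    exact lintegral_mono fun q ↦ cauchy_schwarz q.1 q.2
  calc (∫⁻ t, (∫⁻ x, f t x ∂ν) ^ 2 ∂μ) ^ (1 / 2 : ℝ) ≤ ((∫⁻ x, g x ∂ν) ^ 2) ^ (2⁻¹ : ℝ) := by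
        rw [one_div]; gcongr
    _ = ∫⁻ x, g x ∂ν := pow_rpow_inv_natCast two_ne_zero _

section AddHaar

variable {E : Type*} [NormedAddCommGroup E] [NormedSpace ℝ E] [MeasurableSpace E] [BorelSpace E]
  [FiniteDimensional ℝ E] {μ : Measure E} [μ.IsAddHaarMeasure]

theorem lintegral_setLAverage_ball {f : E → ℝ≥0∞} (hf : Measurable f) {s : ℝ} (hs : 0 < s) :
    ∫⁻ x, ⨍⁻ y in ball x s, f y ∂μ ∂μ = ∫⁻ y, f y ∂μ := by
  set v := μ (ball (0 : E) s)
  have hv0 : v ≠ 0 := (measure_ball_pos μ 0 hs).ne'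
  have hvtop : v ≠ ∞ := measure_ball_lt_top.ne
  have hk : Measurable (uncurry fun x y ↦ (ball x s).indicator f y) := by
    have : (uncurry fun x y ↦ (ball x s).indicator f y) =
        {q : E × E | dist q.2 q.1 < s}.indicator (f ∘ Prod.snd) := by
      ext q; simp [indicator, uncurry]
    rw [this]
    exact (hf.comp measurable_snd).indicator
      (measurableSet_lt (measurable_snd.dist measurable_fst) measurable_const)
  calc ∫⁻ x, ⨍⁻ y in ball x s, f y ∂μ ∂μ
      = (∫⁻ x, ∫⁻ y, (ball x s).indicator f y ∂μ ∂μ) / v := by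
        simp_rw [setLAverage_eq, Measure.addHaar_ball_center μ _ s,
          lintegral_indicator measurableSet_ball, div_eq_mul_inv]
        exact lintegral_mul_const' _ _ (inv_ne_top.2 hv0)
    _ = (∫⁻ y, ∫⁻ x, (ball x s).indicator f y ∂μ ∂μ) / v := by
        rw [lintegral_lintegral_swap hk.aemeasurable]
    _ = (∫⁻ y, f y * v ∂μ) / v := by
        congr 1; refine lintegral_congr fun y ↦ ?_
        have : (fun x ↦ (ball x s).indicator f y) = (ball y s).indicator fun _ ↦ f y := by
          ext x; simp [indicator, mem_ball, dist_comm]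
        rw [this, lintegral_indicator_const measurableSet_ball, Measure.addHaar_ball_center,
          mul_comm]
    _ = ∫⁻ y, f y ∂μ := by
        rw [lintegral_mul_const' _ _ hvtop, ENNReal.mul_div_cancel_right hv0 hvtop]

theorem setLAverage_le_setLAverage_rpow_setLAverage_ball_sq {g : E → ℝ≥0∞} (hg : Measurable g)
    {s : ℝ} (hs : 0 < s) {B : Set E} (hB : ∀ y, g y ≠ 0 → ball y s ⊆ B) :
    ⨍⁻ y in B, g y ∂μ ≤ ⨍⁻ x in B, (⨍⁻ y in ball x s, g y ^ 2 ∂μ) ^ (1 / 2 : ℝ) ∂μ := by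
  have hg_supp : support g ⊆ B := fun y hy ↦ hB y hy (mem_ball_self hs)
  have hmean_supp : support (fun x ↦ ⨍⁻ y in ball x s, g y ∂μ) ⊆ B := by
    refine fun x hx ↦ not_not.1 fun hxB ↦ hx ?_
    have : EqOn g 0 (ball x s) := fun y hy ↦ by
      by_contra hgy
      exact hxB (hB y hgy (mem_ball_comm.1 hy))
    simp [setLAverage_eq, setLIntegral_congr_fun measurableSet_ball this]
  calc ⨍⁻ y in B, g y ∂μ = ⨍⁻ x in B, ⨍⁻ y in ball x s, g y ∂μ ∂μ := by
        rw [setLAverage_eq, setLAverage_eq (f := fun x ↦ ⨍⁻ y in ball x s, g y ∂μ),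
          setLIntegral_eq_of_support_subset hg_supp, setLIntegral_eq_of_support_subset hmean_supp,
          lintegral_setLAverage_ball hg hs]
    _ ≤ _ := laverage_mono_ae <| .of_forall fun x ↦ by
        simpa only [rpow_two] using laverage_le_rpow_laverage_rpow one_le_two hg.aemeasurable

end AddHaar

section TentSpace

variable {E : Type*} [PseudoMetricSpace E] [MeasureSpace E]

noncomputable def ballAverageSq (g : ℝ → E → ℝ≥0∞) (t : ℝ) (x : E) : ℝ≥0∞ :=
  ⨍⁻ y in ball x √t, g t y ^ 2 ∂volume

noncomputable def areaFunction (g : ℝ → E → ℝ≥0∞) (x : E) : ℝ≥0∞ :=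
  (∫⁻ t in Ioi 0, ballAverageSq g t x) ^ (1 / 2 : ℝ)

theorem Tnorm_eq_areaFunction (n : ℕ) (p : ℝ) (g : ℝ → EuclideanSpace ℝ (Fin n) → ℝ≥0∞) :
    Tnorm n p g = (∫⁻ x, areaFunction g x ^ p) ^ (1 / p) := by
  simp only [Tnorm, areaFunction, ballAverageSq, setLAverage_eq, ENNReal.div_eq_inv_mul,
    ← rpow_mul]
  ring_nf

end TentSpace

section AddHaarTent

variable {E : Type*} [NormedAddCommGroup E] [NormedSpace ℝ E] [MeasureSpace E] [BorelSpace E]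
  [FiniteDimensional ℝ E] [(volume : Measure E).IsAddHaarMeasure] {g : ℝ → E → ℝ≥0∞}

theorem measurable_ballAverageSq (hg : Measurable (uncurry g)) :
    Measurable (uncurry (ballAverageSq g)) := by
  have hk : Measurable (uncurry fun (q : ℝ × E) y ↦ (ball q.2 √q.1).indicator (g q.1 · ^ 2) y) := by
    have : (uncurry fun (q : ℝ × E) y ↦ (ball q.2 √q.1).indicator (g q.1 · ^ 2) y) =
        {z : (ℝ × E) × E | dist z.2 z.1.2 < √z.1.1}.indicator (fun z ↦ g z.1.1 z.2 ^ 2) := by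
      ext; simp [indicator, uncurry]
    rw [this]
    exact ((hg.comp (measurable_fst.fst.prodMk measurable_snd)).pow_const 2).indicator
      (measurableSet_lt (measurable_snd.dist measurable_fst.snd)
        (Real.continuous_sqrt.measurable.comp measurable_fst.fst))
  have hnum : Measurable fun q : ℝ × E ↦ ∫⁻ y in ball q.2 √q.1, g q.1 y ^ 2 := by
    simpa only [lintegral_indicator measurableSet_ball] using hk.lintegral_prod_right (ν := volume)
  have hmono : Monotone fun t ↦ volume (ball (0 : E) √t) :=
    fun _ _ h ↦ measure_mono (ball_subset_ball (Real.sqrt_le_sqrt h))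
  have hvol : Measurable fun q : ℝ × E ↦ volume (ball q.2 √q.1) := by
    simpa only [Measure.addHaar_ball_center volume _ (√_), comp_def]
      using hmono.measurable.comp measurable_fst
  have : uncurry (ballAverageSq g) =
      fun q ↦ (∫⁻ y in ball q.2 √q.1, g q.1 y ^ 2) / volume (ball q.2 √q.1) := by
    ext ⟨t, x⟩
    exact setLAverage_eq _ _ _
  rw [this]
  exact hnum.div hvol

theorem measurable_areaFunction (hg : Measurable (uncurry g)) : Measurable (areaFunction g) := by
  have h := (measurable_ballAverageSq hg).comp measurable_swap
  exact (Measurable.lintegral_prod_right (f := fun x t ↦ ballAverageSq g t x)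
    (ν := volume.restrict (Ioi 0)) h).pow_const _

theorem enorm_setAverage_le_setLAverage_rpow_ballAverageSq {F : Type*} [NormedAddCommGroup F]
    [NormedSpace ℝ F] {b : ℝ → E → F} {t : ℝ} (hb : Measurable fun y ↦ ‖b t y‖ₑ) (ht : 0 < t)
    {B : Set E} (hB : ∀ y, b t y ≠ 0 → ball y √t ⊆ B) :
    ‖⨍ y in B, b t y‖ₑ ≤
      ⨍⁻ x in B, ballAverageSq (fun t y ↦ ‖b t y‖ₑ) t x ^ (1 / 2 : ℝ) ∂volume :=
  (enorm_average_le_laverage _).trans <|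
    setLAverage_le_setLAverage_rpow_setLAverage_ball_sq hb (Real.sqrt_pos.2 ht)
      fun y hy ↦ hB y (enorm_ne_zero.1 hy)

end AddHaarTent

theorem stmt12_general (n : ℕ) (p : ℝ) (hp : 1 < p) :
    ∃ C : ℝ≥0∞, 0 < C ∧ C < ⊤ ∧
      ∀ (c : EuclideanSpace ℝ (Fin n)) (r : ℝ), 0 < r →
        ∀ b : ℝ → EuclideanSpace ℝ (Fin n) → ℂ,
          Measurable (Function.uncurry b) →
          (∀ t y, b t y ≠ 0 → 0 < t ∧ Metric.ball y (Real.sqrt t) ⊆ Metric.ball c r) →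
          (∫⁻ t in Ioi (0 : ℝ),
              (‖⨍ y in Metric.ball c r, b t y‖₊ : ℝ≥0∞) ^ 2) ^ ((1 : ℝ) / 2)
            ≤ C * volume (Metric.ball c r) ^ (-(1 / p)) *
                Tnorm n p (fun t y => (‖b t y‖₊ : ℝ≥0∞)) := by
  refine ⟨1, one_pos, one_lt_top, fun c r _ b hb hsupp ↦ ?_⟩
  set B := ball c r
  set g : ℝ → EuclideanSpace ℝ (Fin n) → ℝ≥0∞ := fun t y ↦ ‖b t y‖₊
  have hg : Measurable (uncurry g) := hb.nnnorm.coe_nnreal_ennreal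
  have sqrt_sq (x : ℝ≥0∞) : (x ^ (1 / 2 : ℝ)) ^ 2 = x := by
    rw [← rpow_two, ← rpow_mul]; norm_num
  calc (∫⁻ t in Ioi 0, (‖⨍ y in B, b t y‖₊ : ℝ≥0∞) ^ 2) ^ (1 / 2 : ℝ)
      ≤ (∫⁻ t in Ioi 0, (⨍⁻ x in B, ballAverageSq g t x ^ (1 / 2 : ℝ) ∂volume) ^ 2)
          ^ (1 / 2 : ℝ) := by
        gcongr ?_ ^ _
        refine setLIntegral_mono' measurableSet_Ioi fun t ht ↦ ?_
        gcongr
        exact enorm_setAverage_le_setLAverage_rpow_ballAverageSq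
          (hg.comp measurable_prodMk_left) ht fun y hy ↦ (hsupp t y hy).2
    _ ≤ ⨍⁻ x in B, areaFunction g x ∂volume := by
        simpa only [sqrt_sq, laverage_eq', areaFunction] using rpow_half_lintegral_sq_lintegral_le
          (f := fun t x ↦ ballAverageSq g t x ^ (1 / 2 : ℝ))
          ((measurable_ballAverageSq hg).pow_const _)
    _ ≤ (⨍⁻ x in B, areaFunction g x ^ p ∂volume) ^ (1 / p) :=
        laverage_le_rpow_laverage_rpow hp.le (measurable_areaFunction hg).aemeasurable
    _ = volume B ^ (-(1 / p)) * (∫⁻ x in B, areaFunction g x ^ p) ^ (1 / p) := by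
        rw [setLAverage_eq, ENNReal.div_eq_inv_mul, mul_rpow_of_nonneg _ _ (by positivity),
          inv_rpow, rpow_neg]
    _ ≤ 1 * volume B ^ (-(1 / p)) * Tnorm n p g := by
        rw [one_mul, Tnorm_eq_areaFunction]
        gcongr
        exact Measure.restrict_le_self

/-- let `1 < p < 2` and let `b` be supported in the tent over a ball
`B_i = B(c_i, r_i)`, i.e. `b(t,y) ≠ 0` implies `t > 0` and `B(y,√t) ⊆ B_i`. Then
`(∫₀^∞ |⨍_{B_i} b(t,y) dy|² dt)^{1/2} ≤ C |B_i|^{−1/p} ‖b‖_{T^p}`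
with `C` depending only on `n` and `p`. -/
theorem stmt12 (n : ℕ) (p : ℝ) (hp : 1 < p) (hp2 : p < 2) :
    ∃ C : ℝ≥0∞, 0 < C ∧ C < ⊤ ∧
      ∀ (c : EuclideanSpace ℝ (Fin n)) (r : ℝ), 0 < r →
        ∀ b : ℝ → EuclideanSpace ℝ (Fin n) → ℂ,
          Measurable (Function.uncurry b) →
          (∀ t y, b t y ≠ 0 → 0 < t ∧ Metric.ball y (Real.sqrt t) ⊆ Metric.ball c r) →
          (∫⁻ t in Ioi (0 : ℝ),
              (‖⨍ y in Metric.ball c r, b t y‖₊ : ℝ≥0∞) ^ 2) ^ ((1 : ℝ) / 2)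
            ≤ C * volume (Metric.ball c r) ^ (-(1 / p)) *
                Tnorm n p (fun t y => (‖b t y‖₊ : ℝ≥0∞)) :=
  stmt12_general n p hp
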